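/- arXiv:1206.4453 — 7 statements merged into one kernel-verified Lean document; each statement's English description precedes it below -/
import Mathlib

section
/- Let W : ℝ^d → ℝ be convex and radial, W(x) = w(|x|) with w nondecreasing profile induced by convexity, and let η be any selection of ∂W satisfying η(v) = (η̂(|v|)/|v|)·v with η̂(|v|) ≥ 0 for v ≠ 0. Then for all x ≠ y and all z ∈ ℝ^d, ⟨η(x−y), η(x−z) − η(y−z)⟩ ≥ 0. -/
open scoped RealInnerProductSpace

theorem stmt6 (d : ℕ) (W : EuclideanSpace ℝ (Fin d) → ℝ) (w : ℝ → ℝ)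
    (hW : ConvexOn ℝ Set.univ W) (hrad : ∀ x, W x = w ‖x‖)
    (η : EuclideanSpace ℝ (Fin d) → EuclideanSpace ℝ (Fin d))
    (hsel : ∀ z z', W z' - W z ≥ ⟪η z, z' - z⟫)
    (ηhat : ℝ → ℝ)
    (hform : ∀ v : EuclideanSpace ℝ (Fin d), v ≠ 0 → η v = (ηhat ‖v‖ / ‖v‖) • v)
    (hnn : ∀ v : EuclideanSpace ℝ (Fin d), v ≠ 0 → 0 ≤ ηhat ‖v‖) :
    ∀ x y z : EuclideanSpace ℝ (Fin d), x ≠ y →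
      ⟪η (x - y), η (x - z) - η (y - z)⟫ ≥ 0 := by
  intro x y z hxy
  have hne : x - y ≠ 0 := sub_ne_zero.mpr hxy
  have h1 := hsel (y - z) (x - z)
  have h2 := hsel (x - z) (y - z)
  have hmono : 0 ≤ ⟪x - y, η (x - z) - η (y - z)⟫ := by
    have hxy1 : (x - z) - (y - z) = x - y := by abel
    have hxy2 : (y - z) - (x - z) = -(x - y) := by abel
    rw [hxy1] at h1
    rw [hxy2, inner_neg_right] at h2
    have := add_le_add h1.le h2.le
    rw [inner_sub_right, real_inner_comm]
    linarith [real_inner_comm (η (y - z)) (x - y)]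
  rw [hform (x - y) hne, real_inner_smul_left]
  exact mul_nonneg (div_nonneg (hnn _ hne) (norm_nonneg _)) hmono
end

section
/- Let Ŵ : ℝ → ℝ, Ŵ(x) = (1/2)|x²−1|, and consider three particles at positions x₁, x₂, x₃ with masses m₁, m₂, m₃ summing to 1. Fix 0 < α < 1/4 and set m₁ = 1/4 − α, m₂ = 1/2, m₃ = 1/4 + α, x₁ = −1, x₂ = 0, x₃ = (1−4α)/(1+4α). Then with the antisymmetric selection η of ∂Ŵ given by η(x) = x for |x| > 1, η(x) = −x for |x| < 1, η(1) = −1, η(−1) = 1, the system is stationary: for each i, Σ_{j} m_j η(x_j − x_i) = 0. -/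
theorem stmt8 (α : ℝ) (hα0 : 0 < α) (hα1 : α < 1/4)
    (η : ℝ → ℝ)
    (h1 : ∀ x : ℝ, 1 < |x| → η x = x)
    (h2 : ∀ x : ℝ, |x| < 1 → η x = -x)
    (h3 : η 1 = -1) (h4 : η (-1) = 1)
    (m : Fin 3 → ℝ) (x : Fin 3 → ℝ)
    (hm0 : m 0 = 1/4 - α) (hm1 : m 1 = 1/2) (hm2 : m 2 = 1/4 + α)
    (hx0 : x 0 = -1) (hx1 : x 1 = 0) (hx2 : x 2 = (1 - 4*α) / (1 + 4*α)) :
    ∀ i : Fin 3, ∑ j : Fin 3, m j * η (x j - x i) = 0 := by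
  have hden : (0:ℝ) < 1 + 4*α := by linarith
  set t : ℝ := (1 - 4*α) / (1 + 4*α) with ht
  have ht0 : 0 < t := div_pos (by linarith) hden
  have ht1 : t < 1 := (div_lt_one hden).2 (by linarith)
  have htp1 : 1 < t + 1 := by linarith
  have hη0 : η 0 = 0 := by
    have := h2 0 (by simp); simpa using this
  have hηt : η t = -t := h2 t (by rw [abs_of_pos ht0]; exact ht1)
  have hηnt : η (-t) = t := by
    have := h2 (-t) (by rw [abs_neg, abs_of_pos ht0]; exact ht1)
    simpa using this
  have hηtp1 : η (t + 1) = t + 1 := h1 _ (by rw [abs_of_pos (by linarith)]; exact htp1)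
  have hηntp1 : η (-(t + 1)) = -(t + 1) := h1 _ (by rw [abs_neg, abs_of_pos (by linarith)]; exact htp1)
  have hte : t * (1 + 4*α) = 1 - 4*α := by
    rw [ht, div_mul_cancel₀]; exact ne_of_gt hden
  have hx2' : x 2 = t := hx2
  intro i
  fin_cases i
  · rw [Fin.sum_univ_three]
    show m 0 * η (x 0 - x 0) + m 1 * η (x 1 - x 0) + m 2 * η (x 2 - x 0) = 0
    simp only [hm0, hm1, hm2, hx0, hx1, hx2']
    have e1 : (0:ℝ) - -1 = 1 := by ring
    have e2 : t - -1 = t + 1 := by ring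
    have e3 : (-1:ℝ) - -1 = 0 := by ring
    rw [e1, e2, e3, hη0, h3, hηtp1]
    nlinarith [hte]
  · rw [Fin.sum_univ_three]
    show m 0 * η (x 0 - x 1) + m 1 * η (x 1 - x 1) + m 2 * η (x 2 - x 1) = 0
    simp only [hm0, hm1, hm2, hx0, hx1, hx2']
    have e1 : (-1:ℝ) - 0 = -1 := by ring
    rw [e1, sub_zero, sub_zero, hη0, h4, hηt]
    nlinarith [hte]
  · rw [Fin.sum_univ_three]
    show m 0 * η (x 0 - x 2) + m 1 * η (x 1 - x 2) + m 2 * η (x 2 - x 2) = 0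
    simp only [hm0, hm1, hm2, hx0, hx1, hx2']
    have e1 : (-1:ℝ) - t = -(t + 1) := by ring
    have e2 : (0:ℝ) - t = -t := by ring
    have e3 : t - t = 0 := by ring
    rw [e1, e2, e3, hη0, hηnt, hηntp1]
    nlinarith [hte]
end

section
/- Define α : (1/2, ∞) → (0, π) by sin α(R) = √(R² − 1/4)/R² with α(R) ∈ (0,π) determined by the geometry (α(R) → π as R → 1/2⁺ and α(R) → 0 as R → ∞, α decreasing), and define f(R) = π − 2α(R) + 2 sin α(R). Then f has exactly one zero, and this zero lies in the open interval (1/2, √2/2). -/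
open Filter Set

noncomputable def gg : ℝ → ℝ := fun x => Real.pi - 2 * x + 2 * Real.sin x

lemma gg_anti : StrictAntiOn gg (Icc 0 Real.pi) := by
  apply strictAntiOn_of_deriv_neg (convex_Icc 0 Real.pi)
  · unfold gg; fun_prop
  · intro x hx
    rw [interior_Icc] at hx
    have hd : HasDerivAt gg (0 - 2 * 1 + 2 * Real.cos x) x :=
      ((hasDerivAt_const x Real.pi).sub ((hasDerivAt_id x).const_mul 2)).add
        ((Real.hasDerivAt_sin x).const_mul 2)
    rw [hd.deriv]
    have : Real.cos x < 1 := by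
      have := Real.strictAntiOn_cos (left_mem_Icc.2 Real.pi_pos.le)
        ⟨hx.1.le, hx.2.le⟩ hx.1
      simpa using this
    linarith

lemma sin_one (x : ℝ) (hx : x ∈ Ioo 0 Real.pi) (h : Real.sin x = 1) : x = Real.pi / 2 := by
  rw [Real.sin_eq_one_iff] at h
  obtain ⟨k, hk⟩ := h
  have hpi := Real.pi_pos
  rcases lt_trichotomy k 0 with h1 | h1 | h1
  · have : (k : ℝ) ≤ -1 := by exact_mod_cast Int.le_sub_one_iff.mpr h1
    nlinarith [hx.1]
  · simp [h1] at hk; linarith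
  · have : (1 : ℝ) ≤ (k : ℝ) := by exact_mod_cast h1
    nlinarith [hx.2]

theorem stmt11 (α : ℝ → ℝ)
    (hmem : ∀ R : ℝ, 1/2 < R → α R ∈ Ioo 0 Real.pi)
    (hsin : ∀ R : ℝ, 1/2 < R → Real.sin (α R) = Real.sqrt (R^2 - 1/4) / R^2)
    (hcont : ContinuousOn α (Ioi (1/2)))
    (hanti : StrictAntiOn α (Ioi (1/2)))
    (hlim0 : Tendsto α atTop (nhds 0))
    (hlimpi : Tendsto α (nhdsWithin (1/2) (Ioi (1/2))) (nhds Real.pi)) :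
    (∃! R : ℝ, 1/2 < R ∧ Real.pi - 2 * α R + 2 * Real.sin (α R) = 0) ∧
    (∀ R : ℝ, 1/2 < R → Real.pi - 2 * α R + 2 * Real.sin (α R) = 0 →
      R ∈ Ioo (1/2) (Real.sqrt 2 / 2)) := by
  set f : ℝ → ℝ := fun R => Real.pi - 2 * α R + 2 * Real.sin (α R) with hf
  have hfg : ∀ R, f R = gg (α R) := fun R => rfl
  have hmono : StrictMonoOn f (Ioi (1/2)) := by
    intro a ha b hb hab
    rw [hfg, hfg]
    exact gg_anti ⟨(hmem b hb).1.le, (hmem b hb).2.le⟩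
      ⟨(hmem a ha).1.le, (hmem a ha).2.le⟩ (hanti ha hb hab)
  have h2 : (1/2 : ℝ) < Real.sqrt 2 / 2 := by
    have : (1:ℝ) < Real.sqrt 2 := by
      rw [show (1:ℝ) = Real.sqrt 1 by simp]
      exact Real.sqrt_lt_sqrt (by norm_num) (by norm_num)
    linarith
  have hsq : (Real.sqrt 2 / 2)^2 = 1/2 := by
    rw [div_pow, Real.sq_sqrt (by norm_num : (0:ℝ) ≤ 2)]; norm_num
  have hα2 : α (Real.sqrt 2 / 2) = Real.pi / 2 := by
    apply sin_one _ (hmem _ h2)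
    have h14 : Real.sqrt ((1:ℝ)/2 - 1/4) = 1/2 := by
      rw [show (1:ℝ)/2 - 1/4 = (1/2)^2 by norm_num]
      exact Real.sqrt_sq (by norm_num)
    rw [hsin _ h2, hsq, h14]
    norm_num
  have hf2 : f (Real.sqrt 2 / 2) = 2 := by
    rw [hf]; simp only; rw [hα2, Real.sin_pi_div_two]; ring
  have hcontgg : Continuous gg := by unfold gg; fun_prop
  have hlimf : Tendsto f (nhdsWithin (1/2) (Ioi (1/2))) (nhds (-Real.pi)) := by
    have h := (hcontgg.tendsto Real.pi).comp hlimpi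
    have hval : gg Real.pi = -Real.pi := by simp [gg]; ring
    rw [hval] at h
    exact h
  have hev1 : ∀ᶠ R in nhdsWithin (1/2) (Ioi (1/2)), f R < 0 :=
    hlimf.eventually (eventually_lt_nhds (by linarith [Real.pi_pos] : (-Real.pi) < 0))
  have hev2 : ∀ᶠ R in nhdsWithin ((1:ℝ)/2) (Ioi (1/2)), R < Real.sqrt 2 / 2 :=
    eventually_nhdsWithin_of_eventually_nhds (eventually_lt_nhds h2)
  have hev3 : ∀ᶠ R in nhdsWithin ((1:ℝ)/2) (Ioi (1/2)), R ∈ Ioi ((1:ℝ)/2) :=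
    eventually_mem_nhdsWithin
  have : ∃ R₀, f R₀ < 0 ∧ R₀ < Real.sqrt 2 / 2 ∧ R₀ ∈ Ioi ((1:ℝ)/2) :=
    (hev1.and (hev2.and hev3)).exists
  obtain ⟨R₀, hR₀neg, hR₀lt, hR₀gt⟩ := this
  -- IVT
  have hcontf : ContinuousOn f (Icc R₀ (Real.sqrt 2 / 2)) := by
    apply ContinuousOn.mono _ (fun x hx => lt_of_lt_of_le hR₀gt hx.1 : Icc R₀ (Real.sqrt 2 / 2) ⊆ Ioi (1/2))
    exact (hcontgg.comp_continuousOn hcont)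
  have hiv := intermediate_value_Icc hR₀lt.le hcontf
  have h0mem : (0:ℝ) ∈ Icc (f R₀) (f (Real.sqrt 2 / 2)) := by
    rw [hf2]; exact ⟨hR₀neg.le, by norm_num⟩
  obtain ⟨c, hcmem, hc0⟩ := hiv h0mem
  have hc_gt : (1:ℝ)/2 < c := lt_of_lt_of_le hR₀gt hcmem.1
  have hc_lt : c < Real.sqrt 2 / 2 := by
    rcases lt_or_eq_of_le hcmem.2 with h | h
    · exact h
    · exfalso; rw [h, hf2] at hc0; norm_num at hc0
  refine ⟨⟨c, ⟨hc_gt, hc0⟩, ?_⟩, ?_⟩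
  · rintro y ⟨hy, hy0⟩
    have hy0' : f y = 0 := hy0
    exact hmono.injOn hy hc_gt (by rw [hy0', hc0])
  · intro R hR hR0
    refine ⟨hR, ?_⟩
    by_contra h
    push_neg at h
    rcases lt_or_eq_of_le h with h' | h'
    · have := hmono h2 hR h'
      rw [hf2] at this
      change f R = 0 at hR0
      linarith
    · change f R = 0 at hR0
      rw [← h', hf2] at hR0
      norm_num at hR0
end

section
/- Let w : [0,∞) → ℝ be convex with inf over (0,∞) of the minimal subgradient ∂°w equal to Ω > 0. Consider N particles x₁(t),…,x_N(t) in ℝ^d evolving by ẋᵢ = −(1/N) Σ_{j≠i} ∂°w(|xᵢ−x_j|) (xᵢ−x_j)/|xᵢ−x_j|, with fixed center of mass x₀. Then R(t) := max_i |xᵢ(t) − x₀| satisfies (1/2) d/dt R²(t) ≤ −(Ω/(2N)) R(t) at a.e. time, hence all particles collapse to x₀ in finite time. -/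
/-!
If particle `i` realises `R(t) = max_j ‖x_j - x₀‖`, then `‖x_j - x₀‖ ≤ ‖x_i - x₀‖` gives
`⟪x_i - x₀, x_i - x_j⟫ ≥ ‖x_i - x_j‖² / 2`. Together with `g = ∂°w ≥ Ω` and
`∑_j (x_i - x_j) = N (x_i - x₀)` this yields `d/dt ‖x_i - x₀‖² ≤ -Ω ‖x_i - x₀‖`. The same bound
then holds for the lower right Dini derivative of `R²`, and comparison with the barrier
`max (R(0) - Ω t / 2, 0)² + ε (1 + t)` shows that `R` vanishes from time `2 R(0) / Ω` on.
-/

open scoped RealInnerProductSpace Topology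
open Filter MeasureTheory Asymptotics

theorem norm_sub_sq_div_two_le_inner_sub {E : Type*} [NormedAddCommGroup E]
    [InnerProductSpace ℝ E] {a b : E} (h : ‖b‖ ≤ ‖a‖) : ‖a - b‖ ^ 2 / 2 ≤ ⟪a, a - b⟫ := by
  have hsq : ‖b‖ ^ 2 ≤ ‖a‖ ^ 2 := pow_le_pow_left₀ (norm_nonneg b) h 2
  rw [norm_sub_sq_real, inner_sub_right, real_inner_self_eq_norm_sq]
  linarith

theorem sum_erase_sub_eq_smul_sub {E : Type*} [AddCommGroup E] [Module ℝ E] {N : ℕ}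
    {y : Fin N → E} {x0 : E} (hcm : (1 / (N : ℝ)) • ∑ j, y j = x0) (i : Fin N) :
    ∑ j ∈ Finset.univ.erase i, (y i - y j) = (N : ℝ) • (y i - x0) := by
  have hN : (N : ℝ) ≠ 0 := Nat.cast_ne_zero.2 (Fin.pos i).ne'
  rw [Finset.sum_erase _ (sub_self _), Finset.sum_sub_distrib, Finset.sum_const,
    Finset.card_univ, Fintype.card_fin, ← hcm, smul_sub, smul_smul, mul_one_div_cancel hN,
    one_smul, Nat.cast_smul_eq_nsmul]

-- A colliding pair contributes nothing, as `g 0 / 0 = 0`.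
noncomputable def aggregationVelocity {E : Type*} [NormedAddCommGroup E] [NormedSpace ℝ E]
    (g : ℝ → ℝ) {N : ℕ} (y : Fin N → E) (i : Fin N) : E :=
  -(1 / (N : ℝ)) • ∑ j ∈ Finset.univ.erase i, (g ‖y i - y j‖ / ‖y i - y j‖) • (y i - y j)

theorem inner_aggregationVelocity_le {E : Type*} [NormedAddCommGroup E] [InnerProductSpace ℝ E]
    {N : ℕ} {g : ℝ → ℝ} {Om : ℝ} (hOm : 0 ≤ Om) (hg : ∀ r, 0 < r → Om ≤ g r) {y : Fin N → E}
    {x0 : E} (hcm : (1 / (N : ℝ)) • ∑ j, y j = x0) {i : Fin N}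
    (hi : ∀ j, ‖y j - x0‖ ≤ ‖y i - x0‖) :
    ⟪y i - x0, aggregationVelocity g y i⟫ ≤ -(Om / 2) * ‖y i - x0‖ := by
  have hN : (0 : ℝ) < N := Nat.cast_pos.2 (Fin.pos i)
  have hterm : ∀ j, Om / 2 * ‖y i - y j‖ ≤
      g ‖y i - y j‖ / ‖y i - y j‖ * ⟪y i - x0, y i - y j⟫ := by
    intro j
    rcases (norm_nonneg (y i - y j)).eq_or_lt with hr | hr
    · simp [← hr]
    have hinner : ‖y i - y j‖ ^ 2 / 2 ≤ ⟪y i - x0, y i - y j⟫ := by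
      simpa using norm_sub_sq_div_two_le_inner_sub (hi j)
    have hgr : 0 ≤ g ‖y i - y j‖ / ‖y i - y j‖ := div_nonneg (hOm.trans (hg _ hr)) hr.le
    calc Om / 2 * ‖y i - y j‖ ≤ g ‖y i - y j‖ * ‖y i - y j‖ / 2 := by nlinarith [hg _ hr]
      _ = g ‖y i - y j‖ / ‖y i - y j‖ * (‖y i - y j‖ ^ 2 / 2) := by field_simp
      _ ≤ _ := mul_le_mul_of_nonneg_left hinner hgr
  have hsum : (N : ℝ) * (Om / 2 * ‖y i - x0‖) ≤ -(N * ⟪y i - x0, aggregationVelocity g y i⟫) :=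
    calc (N : ℝ) * (Om / 2 * ‖y i - x0‖)
          = Om / 2 * ‖∑ j ∈ Finset.univ.erase i, (y i - y j)‖ := by
          rw [sum_erase_sub_eq_smul_sub hcm, norm_smul, Real.norm_natCast]; ring
      _ ≤ ∑ j ∈ Finset.univ.erase i, Om / 2 * ‖y i - y j‖ := by
          rw [← Finset.mul_sum]; gcongr; exact norm_sum_le _ _
      _ ≤ ∑ j ∈ Finset.univ.erase i, g ‖y i - y j‖ / ‖y i - y j‖ * ⟪y i - x0, y i - y j⟫ :=
          Finset.sum_le_sum fun j _ => hterm j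
      _ = -(N * ⟪y i - x0, aggregationVelocity g y i⟫) := by
          simp only [aggregationVelocity, inner_smul_right, inner_sum]
          field_simp
  nlinarith

theorem hasDerivAt_max_zero_sq (y : ℝ) :
    HasDerivAt (fun u => max u 0 ^ 2) (2 * max y 0) y := by
  rcases lt_trichotomy y 0 with hy | rfl | hy
  · have hzero : (fun u : ℝ => max u 0 ^ 2) =ᶠ[𝓝 y] fun _ => 0 := by
      filter_upwards [eventually_lt_nhds hy] with u hu
      simp [max_eq_right hu.le]
    simpa [max_eq_right hy.le] using (hasDerivAt_const y (0 : ℝ)).congr_of_eventuallyEq hzero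
  · have hO : (fun u : ℝ => max u 0 ^ 2) =O[𝓝 0] fun u => ‖u - 0‖ ^ 2 :=
      IsBigO.of_bound 1 <| Eventually.of_forall fun u => by
        rcases le_total u 0 with hu | hu <;> simp [hu, sq_nonneg]
    simpa using (hO.hasFDerivAt one_lt_two).hasDerivAt
  · have hsq : (fun u : ℝ => max u 0 ^ 2) =ᶠ[𝓝 y] fun u => u ^ 2 := by
      filter_upwards [eventually_gt_nhds hy] with u hu
      rw [max_eq_left hu.le]
    simpa [max_eq_left hy.le] using (hasDerivAt_pow 2 y).congr_of_eventuallyEq hsq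

theorem HasDerivAt.eq_of_le_of_eq {f F : ℝ → ℝ} {a b t : ℝ} (hf : HasDerivAt f a t)
    (hF : HasDerivAt F b t) (hle : ∀ s, f s ≤ F s) (heq : f t = F t) : a = b := by
  have hmax : IsLocalMax (fun s => f s - F s) t :=
    Eventually.of_forall fun s => by simp only [heq, sub_self, sub_nonpos, hle]
  exact sub_eq_zero.1 (hmax.hasDerivAt_eq_zero (hf.sub hF))

theorem continuous_ciSup_of_fintype {X ι : Type*} [TopologicalSpace X] [Fintype ι] [Nonempty ι]
    {f : ι → X → ℝ} (hf : ∀ i, Continuous (f i)) : Continuous fun x => ⨆ i, f i x := by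
  simp_rw [← Finset.sup'_univ_eq_ciSup]
  exact Continuous.finset_sup'_apply Finset.univ_nonempty fun i _ => hf i

theorem frequently_slope_lt_of_forall_exists_eq {ι : Type*} [Finite ι] {f : ι → ℝ → ℝ}
    {f' : ι → ℝ} {F : ℝ → ℝ} {t r : ℝ} (hF : ∀ s, ∃ j, F s = f j s) (hFt : ContinuousAt F t)
    (hf : ∀ j, HasDerivAt (f j) (f' j) t) (hr : ∀ j, f j t = F t → f' j < r) :
    ∃ᶠ z in 𝓝[>] t, slope F t z < r := by
  obtain ⟨j, hj⟩ : ∃ j, ∃ᶠ z in 𝓝[>] t, F z = f j z :=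
    frequently_exists.1 (Eventually.of_forall hF).frequently
  have hjt : f j t = F t :=
    (tendsto_nhds_unique_of_frequently_eq (hFt.mono_left nhdsWithin_le_nhds)
      ((hf j).continuousAt.mono_left nhdsWithin_le_nhds) hj).symm
  have hslope : ∀ᶠ z in 𝓝[>] t, slope (f j) t z < r :=
    ((hasDerivAt_iff_tendsto_slope.1 (hf j)).mono_left
      (nhdsGT_le_nhdsNE t)).eventually_lt_const (hr j hjt)
  refine (hj.and_eventually hslope).mono fun z ⟨hz, hzr⟩ => ?_
  rwa [slope_def_field, hz, hjt.symm, ← slope_def_field]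

-- `hslope` says that the lower right Dini derivative of `R ^ 2` is at most `-c * R`.
theorem sq_le_max_sub_sq_add_of_frequently_slope_lt {R : ℝ → ℝ} {c ε t : ℝ} (hc : 0 ≤ c)
    (hε : 0 < ε) (ht : 0 ≤ t) (hR : Continuous R) (hR0 : ∀ s, 0 ≤ R s)
    (hslope : ∀ s r, -c * R s < r → ∃ᶠ z in 𝓝[>] s, slope (fun u => R u ^ 2) s z < r) :
    R t ^ 2 ≤ max (R 0 - c / 2 * t) 0 ^ 2 + ε * (1 + t) := by
  set m : ℝ → ℝ := fun u => max (R 0 - c / 2 * u) 0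
  have hB : ∀ u, HasDerivAt (fun u => m u ^ 2 + ε * (1 + u)) (-c * m u + ε) u := by
    intro u
    have hlin : HasDerivAt (fun u => R 0 - c / 2 * u) (-(c / 2)) u := by
      simpa using ((hasDerivAt_id u).const_mul (c / 2)).const_sub (R 0)
    have hε' : HasDerivAt (fun u => ε * (1 + u)) ε u := by
      simpa using ((hasDerivAt_id u).const_add 1).const_mul ε
    exact (((hasDerivAt_max_zero_sq _).comp u hlin).add hε').congr_deriv (by ring)
  refine image_le_of_liminf_slope_right_lt_deriv_boundary' (f := fun u => R u ^ 2)
    (hR.pow 2).continuousOn (fun s _ r hr => hslope s r hr) ?_ (by fun_prop)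
    (fun u _ => (hB u).hasDerivWithinAt) ?_ ⟨ht, le_rfl⟩
  · simp [m, max_eq_left (hR0 0), hε.le]
  · rintro s ⟨hs, -⟩ hRs
    have hms : m s < R s := by
      have : m s ^ 2 < R s ^ 2 := by rw [hRs]; nlinarith
      exact lt_of_pow_lt_pow_left₀ 2 (hR0 s) this
    nlinarith

theorem eq_zero_of_frequently_slope_sq_lt {R : ℝ → ℝ} {c t : ℝ} (hc : 0 < c)
    (hR : Continuous R) (hR0 : ∀ s, 0 ≤ R s)
    (hslope : ∀ s r, -c * R s < r → ∃ᶠ z in 𝓝[>] s, slope (fun u => R u ^ 2) s z < r)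
    (ht : 2 * R 0 / c ≤ t) : R t = 0 := by
  have ht0 : 0 ≤ t := le_trans (by have := hR0 0; positivity) ht
  have hmax : max (R 0 - c / 2 * t) 0 = 0 := by
    rw [div_le_iff₀ hc] at ht
    exact max_eq_right (by linarith)
  have hsq : R t ^ 2 ≤ 0 := by
    refine le_of_forall_pos_le_add fun δ hδ => ?_
    have := sq_le_max_sub_sq_add_of_frequently_slope_lt hc.le
      (div_pos hδ (by linarith : 0 < 1 + t)) ht0 hR hR0 hslope
    rwa [hmax, div_mul_cancel₀ _ (by linarith), zero_pow two_ne_zero] at this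
  exact pow_eq_zero_iff two_ne_zero |>.1 (le_antisymm hsq (sq_nonneg _))

section Particles

variable {E : Type*} [NormedAddCommGroup E] {N : ℕ}

noncomputable def maxDist (y : Fin N → E) (x0 : E) : ℝ := ⨆ i, ‖y i - x0‖

theorem norm_sub_le_maxDist (y : Fin N → E) (x0 : E) (i : Fin N) : ‖y i - x0‖ ≤ maxDist y x0 :=
  le_ciSup (f := fun i => ‖y i - x0‖) (Finite.bddAbove_range _) i

theorem maxDist_nonneg (y : Fin N → E) (x0 : E) : 0 ≤ maxDist y x0 :=
  Real.iSup_nonneg fun _ => norm_nonneg _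

theorem exists_norm_sub_eq_maxDist [NeZero N] (y : Fin N → E) (x0 : E) :
    ∃ i, ‖y i - x0‖ = maxDist y x0 :=
  exists_eq_ciSup_of_finite

theorem norm_sub_sq_le_maxDist_sq (y : Fin N → E) (x0 : E) (i : Fin N) :
    ‖y i - x0‖ ^ 2 ≤ maxDist y x0 ^ 2 :=
  pow_le_pow_left₀ (norm_nonneg _) (norm_sub_le_maxDist y x0 i) 2

theorem continuous_maxDist [NeZero N] [NormedSpace ℝ E] {x : ℝ → Fin N → E}
    (hx : ∀ i, Differentiable ℝ fun s => x s i) (x0 : E) : Continuous fun s => maxDist (x s) x0 :=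
  continuous_ciSup_of_fintype fun i => ((hx i).continuous.sub continuous_const).norm

variable [InnerProductSpace ℝ E] {g : ℝ → ℝ} {Om : ℝ} {x : ℝ → Fin N → E} {x0 : E}

theorem two_inner_aggregationVelocity_le_of_eq_maxDist (hOm : 0 ≤ Om)
    (hg : ∀ r, 0 < r → Om ≤ g r) {y : Fin N → E} (hcm : (1 / (N : ℝ)) • ∑ j, y j = x0)
    {i : Fin N} (hi : ‖y i - x0‖ = maxDist y x0) :
    2 * ⟪y i - x0, aggregationVelocity g y i⟫ ≤ -Om * maxDist y x0 := by
  have := inner_aggregationVelocity_le hOm hg hcm fun j => hi ▸ norm_sub_le_maxDist y x0 j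
  rw [← hi]
  linarith

theorem le_of_hasDerivAt_sq_maxDist [NeZero N] (hOm : 0 ≤ Om) (hg : ∀ r, 0 < r → Om ≤ g r)
    (hode : ∀ t i, HasDerivAt (fun s => x s i) (aggregationVelocity g (x t) i) t)
    (hcm : ∀ t, (1 / (N : ℝ)) • ∑ j, x t j = x0) {t D : ℝ}
    (hD : HasDerivAt (fun s => maxDist (x s) x0 ^ 2) D t) : D ≤ -Om * maxDist (x t) x0 := by
  obtain ⟨i, hi⟩ := exists_norm_sub_eq_maxDist (x t) x0
  have hDi := ((hode t i).sub_const x0).norm_sq.eq_of_le_of_eq hD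
    (fun s => norm_sub_sq_le_maxDist_sq (x s) x0 i) (by rw [hi])
  exact hDi ▸ two_inner_aggregationVelocity_le_of_eq_maxDist hOm hg (hcm t) hi

theorem frequently_slope_sq_maxDist_lt [NeZero N] (hOm : 0 ≤ Om) (hg : ∀ r, 0 < r → Om ≤ g r)
    (hode : ∀ t i, HasDerivAt (fun s => x s i) (aggregationVelocity g (x t) i) t)
    (hcm : ∀ t, (1 / (N : ℝ)) • ∑ j, x t j = x0) {t r : ℝ}
    (hr : -Om * maxDist (x t) x0 < r) :
    ∃ᶠ z in 𝓝[>] t, slope (fun s => maxDist (x s) x0 ^ 2) t z < r := by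
  refine frequently_slope_lt_of_forall_exists_eq (f := fun j s => ‖x s j - x0‖ ^ 2)
    (fun s => ?_)
    ((continuous_maxDist (fun i s => (hode s i).differentiableAt) x0).pow 2).continuousAt
    (fun j => ((hode t j).sub_const x0).norm_sq) fun j hj => ?_
  · obtain ⟨j, hj⟩ := exists_norm_sub_eq_maxDist (x s) x0
    exact ⟨j, by rw [hj]⟩
  · have hj' : ‖x t j - x0‖ = maxDist (x t) x0 :=
      (pow_left_inj₀ (norm_nonneg _) (maxDist_nonneg _ _) two_ne_zero).1 hj
    exact (two_inner_aggregationVelocity_le_of_eq_maxDist hOm hg (hcm t) hj').trans_lt hr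

end Particles

theorem stmt14_general (d N : ℕ) (hN : 0 < N)
    (g : ℝ → ℝ)
    (Om : ℝ) (hOm : 0 < Om) (hOminf : IsGLB {y : ℝ | ∃ r : ℝ, 0 < r ∧ y = g r} Om)
    (x : ℝ → Fin N → EuclideanSpace ℝ (Fin d)) (x0 : EuclideanSpace ℝ (Fin d))
    (hode : ∀ t : ℝ, ∀ i : Fin N, HasDerivAt (fun s => x s i)
      (-(1 / (N : ℝ)) • ∑ j ∈ Finset.univ.erase i,
        (g ‖x t i - x t j‖ / ‖x t i - x t j‖) • (x t i - x t j)) t)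
    (hcm : ∀ t : ℝ, (1 / (N : ℝ)) • ∑ i : Fin N, x t i = x0) :
    (∀ᵐ t : ℝ ∂(volume : Measure ℝ), ∀ D : ℝ,
      HasDerivAt (fun s => (⨆ i : Fin N, ‖x s i - x0‖) ^ 2) D t →
        (1/2) * D ≤ -(Om / (2 * (N : ℝ))) * ⨆ i : Fin N, ‖x t i - x0‖) ∧
    ∃ T : ℝ, ∀ t ≥ T, ∀ i : Fin N, x t i = x0 := by
  have : NeZero N := ⟨hN.ne'⟩
  have hOm_le : ∀ r, 0 < r → Om ≤ g r := fun r hr => hOminf.1 ⟨r, hr, rfl⟩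
  refine ⟨ae_of_all _ fun t D hD => ?_, 2 * maxDist (x 0) x0 / Om, fun t ht i => ?_⟩
  · have hD_le := le_of_hasDerivAt_sq_maxDist hOm.le hOm_le hode hcm hD
    have hN1 : (1 : ℝ) ≤ N := Nat.one_le_cast.2 hN
    have hcoef : Om / (2 * N) ≤ Om / 2 := div_le_div_of_nonneg_left hOm.le two_pos (by linarith)
    have := mul_le_mul_of_nonneg_right hcoef (maxDist_nonneg (x t) x0)
    change 1 / 2 * D ≤ -(Om / (2 * N)) * maxDist (x t) x0
    linarith
  · have hcollapse : maxDist (x t) x0 = 0 :=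
      eq_zero_of_frequently_slope_sq_lt hOm
        (continuous_maxDist (fun i s => (hode s i).differentiableAt) x0)
        (fun s => maxDist_nonneg (x s) x0)
        (fun s r hr => frequently_slope_sq_maxDist_lt hOm.le hOm_le hode hcm hr) ht
    have := hcollapse ▸ norm_sub_le_maxDist (x t) x0 i
    exact sub_eq_zero.1 (norm_le_zero_iff.1 this)

theorem stmt14 (d N : ℕ) (hN : 0 < N) (w : ℝ → ℝ)
    (hw : ConvexOn ℝ (Set.Ici 0) w)
    (g : ℝ → ℝ)
    (hg : ∀ r : ℝ, 0 < r → ∀ s : ℝ, 0 ≤ s → w s - w r ≥ g r * (s - r))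
    (hgmin : ∀ r : ℝ, 0 < r → ∀ ξ : ℝ,
      (∀ s : ℝ, 0 ≤ s → w s - w r ≥ ξ * (s - r)) → |g r| ≤ |ξ|)
    (Om : ℝ) (hOm : 0 < Om) (hOminf : IsGLB {y : ℝ | ∃ r : ℝ, 0 < r ∧ y = g r} Om)
    (x : ℝ → Fin N → EuclideanSpace ℝ (Fin d)) (x0 : EuclideanSpace ℝ (Fin d))
    (hode : ∀ t : ℝ, ∀ i : Fin N, HasDerivAt (fun s => x s i)
      (-(1 / (N : ℝ)) • ∑ j ∈ Finset.univ.erase i,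
        (g ‖x t i - x t j‖ / ‖x t i - x t j‖) • (x t i - x t j)) t)
    (hcm : ∀ t : ℝ, (1 / (N : ℝ)) • ∑ i : Fin N, x t i = x0) :
    (∀ᵐ t : ℝ ∂(volume : Measure ℝ), ∀ D : ℝ,
      HasDerivAt (fun s => (⨆ i : Fin N, ‖x s i - x0‖) ^ 2) D t →
        (1/2) * D ≤ -(Om / (2 * (N : ℝ))) * ⨆ i : Fin N, ‖x t i - x0‖) ∧
    ∃ T : ℝ, ∀ t ≥ T, ∀ i : Fin N, x t i = x0 :=
  stmt14_general d N hN g Om hOm hOminf x x0 hode hcm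
end

section
/- Let w : [0,∞) → ℝ be convex, η a selection of subgradients η_{ji} ∈ ∂W(x_j − x_i) of the radial potential W(x) = w(|x|), where η_{ji} = (a_{ji}/|x_j−x_i|)(x_j−x_i) with a_{ji} ≥ 0. Then for any indices i, j, k with x_i, x_j, x_k distinct, ⟨η_{ji}, η_{jk} − η_{ik}⟩ ≥ 0. -/
open scoped RealInnerProductSpace

theorem stmt15 (d : ℕ) (w : ℝ → ℝ) (hw : ConvexOn ℝ (Set.Ici 0) w)
    (W : EuclideanSpace ℝ (Fin d) → ℝ) (hWdef : ∀ x, W x = w ‖x‖)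
    (hW : ConvexOn ℝ Set.univ W)
    (xi xj xk : EuclideanSpace ℝ (Fin d))
    (hij : xi ≠ xj) (hik : xi ≠ xk) (hjk : xj ≠ xk)
    (ηji ηjk ηik : EuclideanSpace ℝ (Fin d)) (aji : ℝ) (haji : 0 ≤ aji)
    (hjiform : ηji = (aji / ‖xj - xi‖) • (xj - xi))
    (hji : ∀ z, W z - W (xj - xi) ≥ ⟪ηji, z - (xj - xi)⟫)
    (hjk' : ∀ z, W z - W (xj - xk) ≥ ⟪ηjk, z - (xj - xk)⟫)
    (hik' : ∀ z, W z - W (xi - xk) ≥ ⟪ηik, z - (xi - xk)⟫) :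
    ⟪ηji, ηjk - ηik⟫ ≥ 0 := by
  have h1 := hjk' (xi - xk)
  have h2 := hik' (xj - xk)
  have hmono : (0:ℝ) ≤ ⟪ηjk - ηik, xj - xi⟫ := by
    have hsum : (0:ℝ) ≥ ⟪ηjk, (xi - xk) - (xj - xk)⟫ + ⟪ηik, (xj - xk) - (xi - xk)⟫ := by
      linarith
    have e1 : (xi - xk) - (xj - xk) = -(xj - xi) := by abel
    have e2 : (xj - xk) - (xi - xk) = xj - xi := by abel
    rw [e1, e2, inner_neg_right] at hsum
    rw [inner_sub_left]
    linarith
  rw [hjiform, real_inner_smul_left]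
  have hpos : (0:ℝ) < ‖xj - xi‖ := by
    rw [norm_pos_iff, sub_ne_zero]
    exact (Ne.symm hij)
  have hc : 0 ≤ aji / ‖xj - xi‖ := div_nonneg haji hpos.le
  have : (0:ℝ) ≤ ⟪xj - xi, ηjk - ηik⟫ := by
    rwa [real_inner_comm]
  positivity
end

section
/- Consider the 1-dimensional (−1)-convex potential Ŵ(x) = (1/2)|x²−1| and three equal-mass particles at x₁ = 1, x₂ = 0, x₃ = 3/4. For y ∈ [−1,1] (the admissible values of η(1) = −η(−1), the selection at the nonsmooth point), the squared L² norm of the velocity field, up to terms independent of y and positive multiplicative constants, equals y² − y (using η(1/4) = −1/4 and η(−3/4) = 3/4). The minimizer over y ∈ [−1,1] is y = 1/2, which differs from the minimal-norm element 0 of the subdifferential of Ŵ at ±1. -/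
/-- The antisymmetric selection of `∂Ŵ`, `Ŵ(x) = (1/2)|x²−1|`, taking the value `y` at `x = 1`. -/
noncomputable def etaSel (y : ℝ) : ℝ → ℝ := fun x =>
  if x = 1 then y else if x = -1 then -y else if |x| < 1 then -x else x

theorem stmt16 :
    (∃ c > (0 : ℝ), ∃ r : ℝ, ∀ y : ℝ,
        (1/27) * ((etaSel y 0 + etaSel y 1 + etaSel y (1/4))^2
          + (etaSel y (-1) + etaSel y 0 + etaSel y (-3/4))^2
          + (etaSel y (-1/4) + etaSel y (3/4) + etaSel y 0)^2)
        = c * (y^2 - y) + r) ∧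
    (∀ y ∈ Set.Icc (-1 : ℝ) 1, ((1:ℝ)/2)^2 - 1/2 ≤ y^2 - y) ∧
    ((1:ℝ)/2 ≠ 0) := by
  refine ⟨⟨2/27, by norm_num, 7/216, fun y => ?_⟩,
    fun y _ => by nlinarith [sq_nonneg (y - 1/2)], by norm_num⟩
  simp only [etaSel]
  norm_num [abs_lt]
  ring
end

section
/- Let V : ℝ^k → ℝ be λ-convex and let V_n be its Moreau–Yosida regularization V_n(x) = inf_v [V(v) + (n/2)|x−v|²]. Suppose x_n → x and ξ_n ∈ ∂V_n(x_n) (the subdifferential of V_n, which is single-valued since V_n ∈ C^{1,1} for n large) with ξ_n → ξ. Then ξ ∈ ∂V(x), where ∂V is the λ-subdifferential of V. -/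
open scoped RealInnerProductSpace
open Filter

/-!
Along the sequence, `V_n z ≤ V z`, while `liminf V_n (x_n) ≥ V x`: a proximal point of `x_n`
far from `x` costs `n/2 · dist²`, which beats the quadratic minorant that `λ`-convexity gives `V`,
and near `x` the continuity of `V` takes over. Passing to the limit in the subdifferential
inequality of `V_n` at `x_n` then gives the one of `V` at `x`.
-/

open Set

section MoreauEnvelope

variable {E : Type*} [NormedAddCommGroup E]

noncomputable def moreauEnvelope (V : E → ℝ) (t : ℝ) (x : E) : ℝ :=
  ⨅ v, V v + t / 2 * ‖x - v‖ ^ 2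

/-- Prox-boundedness in the sense of Rockafellar–Wets, in its equivalent form of a quadratic
minorant: it is what keeps `moreauEnvelope V t` finite (not a junk `⨅`) for large `t`. -/
def ProxBounded (V : E → ℝ) : Prop :=
  ∃ C B : ℝ, 0 ≤ B ∧ ∀ v, C - B * ‖v‖ ^ 2 ≤ V v

lemma sq_norm_sub_le (a b c : E) : ‖a - c‖ ^ 2 ≤ 2 * ‖a - b‖ ^ 2 + 2 * ‖b - c‖ ^ 2 := by
  have := norm_sub_le_norm_sub_add_norm_sub a b c
  nlinarith [norm_nonneg (a - c), sq_nonneg (‖a - b‖ - ‖b - c‖)]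

lemma ConvexOn.proxBounded [NormedSpace ℝ E] {W : E → ℝ} (hW : LowerSemicontinuous W)
    (hconv : ConvexOn ℝ univ W) : ProxBounded W := by
  obtain ⟨l, c, hlc, -⟩ := hconv.exists_affine_le_of_lt (𝕜 := ℝ) (mem_univ 0) (sub_one_lt (W 0))
    isClosed_univ (hW.lowerSemicontinuousOn univ)
  refine ⟨c - ‖l‖ / 2, ‖l‖ / 2, by positivity, fun v => ?_⟩
  have hmin : l v + c ≤ W v := by simpa using hlc ⟨v, mem_univ v⟩
  have hl : -(‖l‖ * ‖v‖) ≤ l v := by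
    simpa using neg_le_of_abs_le ((l.le_opNorm v).trans_eq' (Real.norm_eq_abs _).symm)
  nlinarith [norm_nonneg l, sq_nonneg (‖v‖ - 1)]

lemma ProxBounded.of_sub_sq {V : E → ℝ} {a : ℝ} (h : ProxBounded fun v => V v - a * ‖v‖ ^ 2) :
    ProxBounded V := by
  obtain ⟨C, B, hB, hCB⟩ := h
  refine ⟨C, B + |a|, by positivity, fun v => ?_⟩
  nlinarith [hCB v, neg_abs_le a, sq_nonneg ‖v‖]

lemma ProxBounded.exists_centered {V : E → ℝ} (h : ProxBounded V) (a : E) :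
    ∃ C B : ℝ, 0 ≤ B ∧ ∀ v, C - B * ‖v - a‖ ^ 2 ≤ V v := by
  obtain ⟨C, B, hB, hCB⟩ := h
  refine ⟨C - 2 * B * ‖a‖ ^ 2, 2 * B, by positivity, fun v => ?_⟩
  have := sq_norm_sub_le v a 0
  simp only [sub_zero] at this
  nlinarith [hCB v]

lemma ProxBounded.eventually_bddBelow {V : E → ℝ} (h : ProxBounded V) :
    ∀ᶠ t in atTop, ∀ y, BddBelow (range fun v => V v + t / 2 * ‖y - v‖ ^ 2) := by
  obtain ⟨C, B, hB, hCB⟩ := h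
  filter_upwards [eventually_ge_atTop (4 * B)] with t ht y
  refine ⟨C - 2 * B * ‖y‖ ^ 2, ?_⟩
  rintro _ ⟨v, rfl⟩
  have := sq_norm_sub_le v y 0
  simp only [sub_zero, norm_sub_rev v y] at this
  nlinarith [hCB v, mul_le_mul_of_nonneg_right ht (sq_nonneg ‖y - v‖)]

lemma moreauEnvelope_le_self {V : E → ℝ} {t : ℝ} {y : E}
    (h : BddBelow (range fun v => V v + t / 2 * ‖y - v‖ ^ 2)) : moreauEnvelope V t y ≤ V y :=
  (ciInf_le h y).trans_eq (by simp)

lemma ProxBounded.eventually_moreauEnvelope_le {V : E → ℝ} (h : ProxBounded V) :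
    ∀ᶠ t in atTop, ∀ y, moreauEnvelope V t y ≤ V y :=
  h.eventually_bddBelow.mono fun _ ht y => moreauEnvelope_le_self (ht y)

lemma le_add_mul_sq_norm_of_far {V : E → ℝ} {C B c r t : ℝ} {x y v : E}
    (hCB : ∀ v, C - B * ‖v - x‖ ^ 2 ≤ V v) (hB : 0 ≤ B) (hr : 0 < r) (hy : ‖y - x‖ < r / 2)
    (hv : r ≤ ‖v - x‖) (ht : 8 * B + 8 * |c - C| / r ^ 2 ≤ t) :
    c ≤ V v + t / 2 * ‖y - v‖ ^ 2 := by
  have hfar : ‖v - x‖ / 2 ≤ ‖y - v‖ := by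
    have := norm_sub_le_norm_sub_add_norm_sub v y x
    rw [norm_sub_rev v y] at this
    linarith
  have hquad : ‖v - x‖ ^ 2 / 4 ≤ ‖y - v‖ ^ 2 := by nlinarith [norm_nonneg (v - x)]
  have hgap : |c - C| ≤ r ^ 2 * (t / 8 - B) := by
    have h8 : 8 * |c - C| / r ^ 2 ≤ t - 8 * B := by linarith
    rw [div_le_iff₀ (by positivity)] at h8
    linarith
  have hrv : r ^ 2 ≤ ‖v - x‖ ^ 2 := by gcongr
  have htB : 0 ≤ t / 8 - B :=
    (mul_nonneg_iff_of_pos_left (by positivity)).mp ((abs_nonneg _).trans hgap)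
  nlinarith [hCB v, le_abs_self (c - C), mul_le_mul_of_nonneg_right hrv htB,
    mul_le_mul_of_nonneg_left hquad (by linarith : 0 ≤ t / 2)]

lemma ProxBounded.eventually_le_moreauEnvelope {ι : Type*} {l : Filter ι} {V : E → ℝ} {x : E}
    {t : ι → ℝ} {y : ι → E} (h : ProxBounded V) (hV : LowerSemicontinuousAt V x)
    (ht : Tendsto t l atTop) (hy : Tendsto y l (nhds x)) {c : ℝ} (hc : c < V x) :
    ∀ᶠ i in l, c ≤ moreauEnvelope V (t i) (y i) := by
  obtain ⟨C, B, hB, hCB⟩ := h.exists_centered x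
  obtain ⟨r, hr, hnear⟩ := Metric.eventually_nhds_iff.mp (hV c hc)
  have hy' := tendsto_nhds.mp (tendsto_iff_norm_sub_tendsto_zero.mp hy) (Iio (r / 2))
    isOpen_Iio (by simpa using hr)
  filter_upwards [ht.eventually_ge_atTop (8 * B + 8 * |c - C| / r ^ 2), hy'] with i hti hyi
  refine le_ciInf fun v => ?_
  rcases lt_or_ge ‖v - x‖ r with hv | hv
  · have ht0 : 0 ≤ t i := by
      have : 0 ≤ 8 * |c - C| / r ^ 2 := by positivity
      linarith
    have := hnear (by rwa [dist_eq_norm])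
    nlinarith [sq_nonneg ‖y i - v‖]
  · exact le_add_mul_sq_norm_of_far hCB hB hr hyi hv hti

end MoreauEnvelope

theorem stmt19 (k : ℕ) (lam : ℝ) (V : EuclideanSpace ℝ (Fin k) → ℝ)
    (hconv : ConvexOn ℝ Set.univ (fun x => V x - lam / 2 * ‖x‖ ^ 2))
    (Vn : ℕ → EuclideanSpace ℝ (Fin k) → ℝ)
    (hVn : ∀ n x, Vn n x = ⨅ v : EuclideanSpace ℝ (Fin k),
      (V v + (n : ℝ) / 2 * ‖x - v‖ ^ 2))
    (lamn : ℕ → ℝ) (hlamn : Tendsto lamn atTop (nhds lam))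
    (xn : ℕ → EuclideanSpace ℝ (Fin k)) (x : EuclideanSpace ℝ (Fin k))
    (hx : Tendsto xn atTop (nhds x))
    (ξn : ℕ → EuclideanSpace ℝ (Fin k)) (ξ : EuclideanSpace ℝ (Fin k))
    (hξ : Tendsto ξn atTop (nhds ξ))
    (hsub : ∀ n z, Vn n z - Vn n (xn n)
      ≥ ⟪ξn n, z - xn n⟫ + lamn n / 2 * ‖z - xn n‖ ^ 2) :
    ∀ z, V z - V x ≥ ⟪ξ, z - x⟫ + lam / 2 * ‖z - x‖ ^ 2 := by
  obtain rfl : Vn = fun n : ℕ => moreauEnvelope V n := funext₂ hVn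
  intro z
  have hW := continuousOn_univ.mp (hconv.continuousOn isOpen_univ)
  have hV : Continuous V :=
    (hW.add (by fun_prop : Continuous fun v : EuclideanSpace ℝ (Fin k) => lam / 2 * ‖v‖ ^ 2)).congr
      fun v => sub_add_cancel _ _
  have hprox : ProxBounded V := (hconv.proxBounded hW.lowerSemicontinuous).of_sub_sq
  have hn := tendsto_natCast_atTop_atTop (R := ℝ)
  have hzx : Tendsto (fun n => z - xn n) atTop (nhds (z - x)) := tendsto_const_nhds.sub hx
  have hlim := (hξ.inner hzx).add ((hlamn.div_const 2).mul (hzx.norm.pow 2))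
  rw [ge_iff_le, le_sub_comm]
  refine le_of_forall_lt_imp_le_of_dense fun c hc => ?_
  rw [le_sub_comm]
  refine le_of_tendsto hlim ?_
  filter_upwards [hn.eventually hprox.eventually_moreauEnvelope_le,
    hprox.eventually_le_moreauEnvelope (hV.lowerSemicontinuous x) hn hx hc] with n hle hge
  linarith [hsub n z, hle z]
end
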